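/- arXiv:2003.13560 — 4 statements merged into one kernel-verified Lean document; each statement's English description precedes it below -/
import Mathlib

section
/- Fix α > 0, e₁ > 0, and real e₂, e₃ ≥ 0. For a price vector p ∈ ℝⁿ define x_i(p) = (ω_i - p_i - p_b)/α and f(p) = e₁·Σᵢ(p_i + p_b)·x_i(p) - e₂·(Σᵢ x_i(p))² - e₃·Σᵢ((p_i + p_b)/α)². If ω_i > ω_j and p is a vector with p_i < p_j, then the vector q obtained from p by swapping coordinates i and j satisfies f(q) > f(p). In particular, f(q) - f(p) = (e₁/α)·(ω_i - ω_j)·(p_j - p_i). -/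
/-!
Writing `r = p + p_b` for the total prices, the objective is
`(e₁/α) (Σ ω_k r_k - Σ r_k²) - e₂ ((Σ ω_k - Σ r_k)/α)² - (e₃/α²) Σ r_k²`.
Swapping two prices preserves `Σ r_k` and `Σ r_k²`, so only the cross term `Σ ω_k r_k` moves,
and it moves by `(ω_i - ω_j)(r_j - r_i)`: pairing the larger preference with the larger price pays.
-/

open Finset

theorem Fintype.sum_mul_comp_swap_sub {ι R : Type*} [Fintype ι] [DecidableEq ι] [CommRing R]
    (a b : ι → R) (i j : ι) :
    ∑ k, a k * b (Equiv.swap i j k) - ∑ k, a k * b k = (a i - a j) * (b j - b i) := by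
  rcases eq_or_ne i j with rfl | hij
  · simp
  rw [← sum_sub_distrib, Fintype.sum_eq_add i j hij]
  · simp only [Equiv.swap_apply_left, Equiv.swap_apply_right]
    ring
  · rintro k ⟨hki, hkj⟩
    rw [Equiv.swap_apply_of_ne_of_ne hki hkj, sub_self]

section Objective

variable {ι : Type*} [Fintype ι]

/-- `r k` is the total price `p k + p_b`, so `(ω k - r k) / α` is the demand `x_k`. -/
noncomputable def retailObjective (α e₁ e₂ e₃ : ℝ) (ω r : ι → ℝ) : ℝ :=
  e₁ * ∑ k, r k * ((ω k - r k) / α) - e₂ * (∑ k, (ω k - r k) / α) ^ 2 - e₃ * ∑ k, (r k / α) ^ 2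

theorem retailObjective_eq (α e₁ e₂ e₃ : ℝ) (ω r : ι → ℝ) :
    retailObjective α e₁ e₂ e₃ ω r = e₁ / α * (∑ k, ω k * r k - ∑ k, r k ^ 2)
      - e₂ * ((∑ k, ω k - ∑ k, r k) / α) ^ 2 - e₃ / α ^ 2 * ∑ k, r k ^ 2 := by
  simp only [retailObjective, ← sum_sub_distrib, mul_sum, sum_div, div_pow]
  congr 1
  · congr 1
    exact sum_congr rfl fun k _ => by ring
  · exact sum_congr rfl fun k _ => by ring

theorem retailObjective_comp_swap_sub [DecidableEq ι] (α e₁ e₂ e₃ : ℝ) (ω r : ι → ℝ) (i j : ι) :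
    retailObjective α e₁ e₂ e₃ ω (r ∘ Equiv.swap i j) - retailObjective α e₁ e₂ e₃ ω r
      = e₁ / α * (ω i - ω j) * (r j - r i) := by
  have hlin := Fintype.sum_mul_comp_swap_sub ω r i j
  have hsum : ∑ k, r (Equiv.swap i j k) = ∑ k, r k := Equiv.sum_comp _ r
  have hsq : ∑ k, r (Equiv.swap i j k) ^ 2 = ∑ k, r k ^ 2 := Equiv.sum_comp _ (r · ^ 2)
  simp only [retailObjective_eq, Function.comp_apply, hsum, hsq]
  linear_combination e₁ / α * hlin

end Objective

theorem swap_increases_objective_general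
    (n : ℕ) (i j : Fin n)
    (α e₁ e₂ e₃ p_b : ℝ) (hα : 0 < α) (he₁ : 0 < e₁)
    (ω p : Fin n → ℝ) (hω : ω i > ω j) (hp : p i < p j)
    (x : (Fin n → ℝ) → Fin n → ℝ)
    (hx : ∀ q k, x q k = (ω k - q k - p_b) / α)
    (f : (Fin n → ℝ) → ℝ)
    (hf : ∀ q, f q = e₁ * (∑ k, (q k + p_b) * x q k)
        - e₂ * (∑ k, x q k) ^ 2 - e₃ * (∑ k, ((q k + p_b) / α) ^ 2))
    (q : Fin n → ℝ) (hq : q = p ∘ Equiv.swap i j) :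
    f q - f p = (e₁ / α) * (ω i - ω j) * (p j - p i) ∧ f q > f p := by
  have hf' : ∀ q, f q = retailObjective α e₁ e₂ e₃ ω (q · + p_b) := fun q => by
    simp only [hf, hx, retailObjective, sub_sub]
  have hdiff : f q - f p = e₁ / α * (ω i - ω j) * (p j - p i) := by
    rw [hf', hf', hq]
    exact (retailObjective_comp_swap_sub α e₁ e₂ e₃ ω (p · + p_b) i j).trans (by ring)
  refine ⟨hdiff, sub_pos.mp ?_⟩
  rw [hdiff]
  have := sub_pos.mpr hω
  have := sub_pos.mpr hp
  positivity

theorem swap_increases_objective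
    (n : ℕ) (i j : Fin n) (hij : i ≠ j)
    (α e₁ e₂ e₃ p_b : ℝ) (hα : 0 < α) (he₁ : 0 < e₁) (he₂ : 0 ≤ e₂) (he₃ : 0 ≤ e₃)
    (ω p : Fin n → ℝ) (hω : ω i > ω j) (hp : p i < p j)
    (x : (Fin n → ℝ) → Fin n → ℝ)
    (hx : ∀ q k, x q k = (ω k - q k - p_b) / α)
    (f : (Fin n → ℝ) → ℝ)
    (hf : ∀ q, f q = e₁ * (∑ k, (q k + p_b) * x q k)
        - e₂ * (∑ k, x q k) ^ 2 - e₃ * (∑ k, ((q k + p_b) / α) ^ 2))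
    (q : Fin n → ℝ) (hq : q = p ∘ Equiv.swap i j) :
    f q - f p = (e₁ / α) * (ω i - ω j) * (p j - p i) ∧ f q > f p :=
  swap_increases_objective_general n i j α e₁ e₂ e₃ p_b hα he₁ ω p hω hp x hx f hf q hq
end

section
/- Fix α > 0, e₁ > 0, e₂, e₃ ≥ 0 and a constant p_b. Let F(p) = e₁·Σᵢ(p_i + p_b)·(ω_i - p_i - p_b)/α - e₂·(Σᵢ (ω_i - p_i - p_b)/α)² - e₃·Σᵢ((p_i+p_b)/α)² + Σᵢ min(0, (ω_i - p_b - p_i)/α). If ω_i > ω_j and p_i < p_j, then swapping coordinates i and j of p strictly increases F. -/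
/-!
Swapping the prices of consumers `i` and `j` leaves the total demand and the multiset of prices
unchanged, so the `e₂` and `e₃` terms do not move. The revenue term gains exactly
`(p j - p i) * (ω i - ω j) / α > 0`, the higher price now going to the consumer who values the
good more. The penalty `min 0` is concave, and the swap replaces the demands `ω i - p i` and
`ω j - p j` by two values with the same sum lying between them, so it cannot decrease.
-/

theorem sum_comp_swap_sub_sum {ι α M : Type*} [Fintype ι] [DecidableEq ι] [AddCommGroup M]
    (f : ι → α → M) (p : ι → α) {i j : ι} (hij : i ≠ j) :
    ∑ k, f k (p (Equiv.swap i j k)) - ∑ k, f k (p k)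
      = f i (p j) + f j (p i) - f i (p i) - f j (p j) := by
  rw [← Finset.sum_sub_distrib, Fintype.sum_eq_add i j hij]
  · rw [Equiv.swap_apply_left, Equiv.swap_apply_right]
    abel
  · rintro k ⟨hki, hkj⟩
    rw [Equiv.swap_apply_of_ne_of_ne hki hkj, sub_self]

theorem min_zero_add_min_zero_le {a b c d : ℝ} (hda : d ≤ a) (hdb : d ≤ b) (h : a + b = c + d) :
    min 0 c + min 0 d ≤ min 0 a + min 0 b := by
  grind

theorem swap_increases_objective_formulation2_general
    (n : ℕ) (i j : Fin n) (hij : i ≠ j)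
    (α e₁ e₂ e₃ p_b : ℝ) (hα : 0 < α) (he₁ : 0 < e₁)
    (ω p : Fin n → ℝ) (hω : ω i > ω j) (hp : p i < p j)
    (F : (Fin n → ℝ) → ℝ)
    (hF : ∀ q, F q = e₁ * (∑ k, (q k + p_b) * ((ω k - q k - p_b) / α))
        - e₂ * (∑ k, (ω k - q k - p_b) / α) ^ 2
        - e₃ * (∑ k, ((q k + p_b) / α) ^ 2)
        + ∑ k, min 0 ((ω k - p_b - q k) / α)) :
    F (p ∘ Equiv.swap i j) > F p := by
  have hrevenue := sum_comp_swap_sub_sum (fun k x => (x + p_b) * ((ω k - x - p_b) / α)) p hij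
  have hdemand := sum_comp_swap_sub_sum (fun k x => (ω k - x - p_b) / α) p hij
  have hcost := Equiv.sum_comp (Equiv.swap i j) (fun k => ((p k + p_b) / α) ^ 2)
  have hpenalty := sum_comp_swap_sub_sum (fun k x => min 0 ((ω k - p_b - x) / α)) p hij
  have hgain : 0 < e₁ * ((p j - p i) * (ω i - ω j) / α) :=
    mul_pos he₁ (div_pos (mul_pos (by linarith) (by linarith)) hα)
  have hmin : min 0 ((ω i - p_b - p i) / α) + min 0 ((ω j - p_b - p j) / α)
      ≤ min 0 ((ω i - p_b - p j) / α) + min 0 ((ω j - p_b - p i) / α) :=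
    min_zero_add_min_zero_le (by gcongr) (by gcongr) (by ring)
  rw [hF, hF]
  simp only [Function.comp_apply] at hrevenue hdemand hcost hpenalty ⊢
  have hdemand_eq : ∑ k, (ω k - p (Equiv.swap i j k) - p_b) / α = ∑ k, (ω k - p k - p_b) / α := by
    linarith [show (ω i - p j - p_b) / α + (ω j - p i - p_b) / α - (ω i - p i - p_b) / α
      - (ω j - p j - p_b) / α = 0 by ring]
  rw [hdemand_eq, hcost]
  have hrevenue_gain :
      (p j + p_b) * ((ω i - p j - p_b) / α) + (p i + p_b) * ((ω j - p i - p_b) / α)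
      - (p i + p_b) * ((ω i - p i - p_b) / α) - (p j + p_b) * ((ω j - p j - p_b) / α)
      = (p j - p i) * (ω i - ω j) / α := by ring
  nlinarith

theorem swap_increases_objective_formulation2
    (n : ℕ) (i j : Fin n) (hij : i ≠ j)
    (α e₁ e₂ e₃ p_b : ℝ) (hα : 0 < α) (he₁ : 0 < e₁) (he₂ : 0 ≤ e₂) (he₃ : 0 ≤ e₃)
    (ω p : Fin n → ℝ) (hω : ω i > ω j) (hp : p i < p j)
    (F : (Fin n → ℝ) → ℝ)
    (hF : ∀ q, F q = e₁ * (∑ k, (q k + p_b) * ((ω k - q k - p_b) / α))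
        - e₂ * (∑ k, (ω k - q k - p_b) / α) ^ 2
        - e₃ * (∑ k, ((q k + p_b) / α) ^ 2)
        + ∑ k, min 0 ((ω k - p_b - q k) / α)) :
    F (p ∘ Equiv.swap i j) > F p :=
  swap_increases_objective_formulation2_general n i j hij α e₁ e₂ e₃ p_b hα he₁ ω p hω hp F hF
end

section
/- Suppose p maximizes the Formulation-1 objective f(p) = e₁·Σᵢ(p_i + p_b)·(ω_i - p_i - p_b)/α - e₂·(Σᵢ(ω_i - p_i - p_b)/α)² - e₃·Σᵢ((p_i+p_b)/α)² over the feasible set {p : 0 ≤ p_i ≤ P, |p_i - p_j| ≤ η, p_i + p_b ≤ ω_i for all i, j} with e₁ > 0, α > 0, e₂, e₃ ≥ 0. Then ω_i ≥ ω_j implies p_i ≥ p_j. -/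
/-!
If `p i < p j`, replace both prices by their mean `c`. The result is still feasible (the caps hold
because `c < p j ≤ ω j - p_b ≤ ω i - p_b`), it leaves `∑ (ω k - p k - p_b)` and hence the `e₂` term
unchanged, lowers the sum of squares, and raises the revenue term by
`e₁ ((p j - p i)² + (ω i - ω j)(p j - p i)) / (2α) > 0`, contradicting optimality. Averaging rather
than swapping the two prices is what makes this work also when `ω i = ω j`: the gain `(p j - p i)²`
comes from the concavity of the revenue in each price.
-/

open Finset

section PairAverage

variable {ι : Type*} [DecidableEq ι]

noncomputable def pairAverage (p : ι → ℝ) (i j : ι) : ι → ℝ :=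
  fun k => if k = i ∨ k = j then (p i + p j) / 2 else p k

variable {p : ι → ℝ} {i j : ι}

theorem pairAverage_left : pairAverage p i j i = (p i + p j) / 2 := by
  simp [pairAverage]

theorem pairAverage_right : pairAverage p i j j = (p i + p j) / 2 := by
  simp [pairAverage]

theorem pairAverage_of_ne {k : ι} (hi : k ≠ i) (hj : k ≠ j) : pairAverage p i j k = p k := by
  simp [pairAverage, hi, hj]

theorem pairAverage_eq_or (k : ι) :
    pairAverage p i j k = (p i + p j) / 2 ∨ pairAverage p i j k = p k := by
  unfold pairAverage
  split_ifs
  exacts [Or.inl rfl, Or.inr rfl]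

theorem sum_pairAverage_sub [Fintype ι] {M : Type*} [AddCommGroup M] (g : ι → ℝ → M)
    (hij : i ≠ j) :
    ∑ k, g k (pairAverage p i j k) - ∑ k, g k (p k)
      = (g i ((p i + p j) / 2) - g i (p i)) + (g j ((p i + p j) / 2) - g j (p j)) := by
  rw [← sum_sub_distrib, ← sum_subset (subset_univ {i, j}), sum_pair hij, pairAverage_left,
    pairAverage_right]
  intro k _ hk
  simp only [mem_insert, mem_singleton, not_or] at hk
  rw [pairAverage_of_ne hk.1 hk.2, sub_self]

theorem pairAverage_mem_Icc {a b : ℝ} (h : ∀ k, p k ∈ Set.Icc a b) (k : ι) :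
    pairAverage p i j k ∈ Set.Icc a b := by
  rcases pairAverage_eq_or (p := p) (i := i) (j := j) k with hk | hk <;> rw [hk]
  · obtain ⟨hi₁, hi₂⟩ := h i
    obtain ⟨hj₁, hj₂⟩ := h j
    constructor <;> linarith
  · exact h k

theorem abs_pairAverage_sub_le {η : ℝ} (h : ∀ k l, |p k - p l| ≤ η) (k l : ι) :
    |pairAverage p i j k - pairAverage p i j l| ≤ η := by
  have hmid : ∀ k, |(p i + p j) / 2 - p k| ≤ η := fun k => by
    have hi := abs_le.mp (h i k)
    have hj := abs_le.mp (h j k)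
    rw [abs_le]
    constructor <;> linarith [hi.1, hi.2, hj.1, hj.2]
  rcases pairAverage_eq_or (p := p) (i := i) (j := j) k with hk | hk <;>
    rcases pairAverage_eq_or (p := p) (i := i) (j := j) l with hl | hl <;> rw [hk, hl]
  · simpa using (abs_nonneg _).trans (h i i)
  · exact hmid l
  · rw [abs_sub_comm]; exact hmid k
  · exact h k l

theorem pairAverage_add_le {ω : ι → ℝ} {b : ℝ} (h : ∀ k, p k + b ≤ ω k) (hp : p i ≤ p j)
    (hω : ω j ≤ ω i) (k : ι) : pairAverage p i j k + b ≤ ω k := by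
  rcases eq_or_ne k i with rfl | hki
  · rw [pairAverage_left]; linarith [h j]
  rcases eq_or_ne k j with rfl | hkj
  · rw [pairAverage_right]; linarith [h k]
  rw [pairAverage_of_ne hki hkj]
  exact h k

end PairAverage

section Objective

variable {ι : Type*} [Fintype ι]

noncomputable def priceObjective (α e₁ e₂ e₃ p_b : ℝ) (ω q : ι → ℝ) : ℝ :=
  e₁ * (∑ k, (q k + p_b) * ((ω k - q k - p_b) / α))
    - e₂ * (∑ k, (ω k - q k - p_b) / α) ^ 2
    - e₃ * (∑ k, ((q k + p_b) / α) ^ 2)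

variable [DecidableEq ι] {α e₁ e₂ e₃ p_b : ℝ} {ω p : ι → ℝ} {i j : ι}

theorem priceObjective_pairAverage_sub (hij : i ≠ j) :
    priceObjective α e₁ e₂ e₃ p_b ω (pairAverage p i j) - priceObjective α e₁ e₂ e₃ p_b ω p
      = e₁ * (((p j - p i) ^ 2 + (ω i - ω j) * (p j - p i)) / (2 * α))
        + e₃ * ((p j - p i) ^ 2 / (2 * α ^ 2)) := by
  have revenue := sum_pairAverage_sub (p := p) (fun k x => (x + p_b) * ((ω k - x - p_b) / α)) hij
  have supply := sum_pairAverage_sub (p := p) (fun k x => (ω k - x - p_b) / α) hij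
  have squares := sum_pairAverage_sub (p := p) (fun k x => ((x + p_b) / α) ^ 2) hij
  unfold priceObjective
  linear_combination e₁ * revenue - e₃ * squares
    - e₂ * (∑ k, (ω k - pairAverage p i j k - p_b) / α + ∑ k, (ω k - p k - p_b) / α) * supply

theorem priceObjective_lt_pairAverage (hα : 0 < α) (he₁ : 0 < e₁) (he₃ : 0 ≤ e₃)
    (hp : p i < p j) (hω : ω j ≤ ω i) :
    priceObjective α e₁ e₂ e₃ p_b ω p < priceObjective α e₁ e₂ e₃ p_b ω (pairAverage p i j) := by
  have hij : i ≠ j := fun h => hp.ne (congrArg p h)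
  rw [← sub_pos, priceObjective_pairAverage_sub hij]
  have hd : 0 < p j - p i := sub_pos.mpr hp
  have hrev : 0 < ((p j - p i) ^ 2 + (ω i - ω j) * (p j - p i)) / (2 * α) := by
    have : 0 ≤ (ω i - ω j) * (p j - p i) := mul_nonneg (sub_nonneg.mpr hω) hd.le
    positivity
  have hsq : 0 ≤ (p j - p i) ^ 2 / (2 * α ^ 2) := by positivity
  exact add_pos_of_pos_of_nonneg (mul_pos he₁ hrev) (mul_nonneg he₃ hsq)

end Objective

theorem fairness_of_optimal_prices_general
    (n : ℕ) (i j : Fin n)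
    (α e₁ e₂ e₃ p_b P η : ℝ) (hα : 0 < α) (he₁ : 0 < e₁) (he₃ : 0 ≤ e₃)
    (ω : Fin n → ℝ)
    (f : (Fin n → ℝ) → ℝ)
    (hf : ∀ q, f q = e₁ * (∑ k, (q k + p_b) * ((ω k - q k - p_b) / α))
        - e₂ * (∑ k, (ω k - q k - p_b) / α) ^ 2
        - e₃ * (∑ k, ((q k + p_b) / α) ^ 2))
    (feasible : (Fin n → ℝ) → Prop)
    (hfeas : ∀ q, feasible q ↔
        (∀ k, 0 ≤ q k ∧ q k ≤ P) ∧ (∀ k l, |q k - q l| ≤ η) ∧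
        (∀ k, q k + p_b ≤ ω k))
    (p : Fin n → ℝ) (hp : feasible p)
    (hopt : ∀ q, feasible q → f q ≤ f p)
    (hω : ω i ≥ ω j) :
    p i ≥ p j := by
  by_contra! hlt
  obtain ⟨hbox, hspread, hcap⟩ := (hfeas p).mp hp
  have havg : feasible (pairAverage p i j) := (hfeas _).mpr
    ⟨pairAverage_mem_Icc hbox, abs_pairAverage_sub_le hspread, pairAverage_add_le hcap hlt.le hω⟩
  have hle := hopt _ havg
  rw [hf, hf] at hle
  exact hle.not_gt (priceObjective_lt_pairAverage hα he₁ he₃ hlt hω)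

theorem fairness_of_optimal_prices
    (n : ℕ) (i j : Fin n)
    (α e₁ e₂ e₃ p_b P η : ℝ) (hα : 0 < α) (he₁ : 0 < e₁) (he₂ : 0 ≤ e₂) (he₃ : 0 ≤ e₃)
    (ω : Fin n → ℝ)
    (f : (Fin n → ℝ) → ℝ)
    (hf : ∀ q, f q = e₁ * (∑ k, (q k + p_b) * ((ω k - q k - p_b) / α))
        - e₂ * (∑ k, (ω k - q k - p_b) / α) ^ 2
        - e₃ * (∑ k, ((q k + p_b) / α) ^ 2))
    (feasible : (Fin n → ℝ) → Prop)
    (hfeas : ∀ q, feasible q ↔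
        (∀ k, 0 ≤ q k ∧ q k ≤ P) ∧ (∀ k l, |q k - q l| ≤ η) ∧
        (∀ k, q k + p_b ≤ ω k))
    (p : Fin n → ℝ) (hp : feasible p)
    (hopt : ∀ q, feasible q → f q ≤ f p)
    (hω : ω i ≥ ω j) :
    p i ≥ p j :=
  fairness_of_optimal_prices_general n i j α e₁ e₂ e₃ p_b P η hα he₁ he₃ ω f hf feasible hfeas p hp
    hopt hω
end

section
/- Consider the unconstrained maximization over p ∈ ℝⁿ of L(p) = e₁·Σᵢ pᵢ(ωᵢ - pᵢ)/α - e₂β·(Σᵢ(ωᵢ - pᵢ)/α)² - e₃·Σᵢ(pᵢ/α)², with e₁, e₃ > 0, e₂β ≥ 0, α > 0. At any stationary point, pᵢ - p_j = (e₁·α·(ωᵢ - ω_j))/(2(α·e₁ + e₃)) for all i, j. Consequently, the maximal price spread equals η* = e₁·α·(ω_max - ω_min)/(2(α·e₁ + e₃)). -/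
/-! Subtracting the first-order conditions at `i` and `j` cancels the coupling term, which depends
on `p` only through `∑ k, p k`; what is left is linear in `p i - p j` and `ω i - ω j`, with the
positive factor `e₁ α / (2 (α e₁ + e₃))`. Since the spread is a nonnegative multiple of the
preference gap, it is largest between the extreme preferences. -/

lemma sub_le_mul_extreme_sub {ι : Type*} {ω p : ι → ℝ} {c : ℝ} (hc : 0 ≤ c)
    (hp : ∀ i j, p i - p j = c * (ω i - ω j)) {imax imin : ι}
    (hmax : ∀ k, ω k ≤ ω imax) (hmin : ∀ k, ω imin ≤ ω k) (k l : ι) :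
    p k - p l ≤ c * (ω imax - ω imin) := by
  rw [hp]
  exact mul_le_mul_of_nonneg_left (by linarith [hmax k, hmin l]) hc

lemma stationary_mul_sub {ι : Type*} [Fintype ι] {α e₁ e₂ e₃ β : ℝ} {ω p : ι → ℝ} (hα : α ≠ 0)
    (hstat : ∀ i, e₁ * (ω i - 2 * p i) / α
        + (2 * e₂ * β / α) * (∑ k, (ω k - p k) / α)
        - 2 * e₃ * p i / α ^ 2 = 0) (i j : ι) :
    2 * (α * e₁ + e₃) * (p i - p j) = e₁ * α * (ω i - ω j) := by
  have hi := hstat i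
  have hj := hstat j
  field_simp at hi hj
  linear_combination hj - hi

theorem stationary_price_spread_general
    (n : ℕ) (α e₁ e₂ e₃ β : ℝ) (hα : 0 < α) (he₁ : 0 < e₁) (he₃ : 0 < e₃)
    (ω p : Fin n → ℝ)
    (hstat : ∀ i, e₁ * (ω i - 2 * p i) / α
        + (2 * e₂ * β / α) * (∑ k, (ω k - p k) / α)
        - 2 * e₃ * p i / α ^ 2 = 0)
    (imax imin : Fin n)
    (hmax : ∀ k, ω k ≤ ω imax) (hmin : ∀ k, ω imin ≤ ω k) :
    (∀ i j, p i - p j = e₁ * α * (ω i - ω j) / (2 * (α * e₁ + e₃))) ∧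
    (∀ k l, p k - p l ≤ e₁ * α * (ω imax - ω imin) / (2 * (α * e₁ + e₃))) ∧
    p imax - p imin = e₁ * α * (ω imax - ω imin) / (2 * (α * e₁ + e₃)) := by
  have hden : 0 < 2 * (α * e₁ + e₃) := by positivity
  have hspread : ∀ i j, p i - p j = e₁ * α * (ω i - ω j) / (2 * (α * e₁ + e₃)) := fun i j =>
    eq_div_of_mul_eq hden.ne' (by rw [mul_comm]; exact stationary_mul_sub hα.ne' hstat i j)
  have hspread' : ∀ i j, p i - p j = e₁ * α / (2 * (α * e₁ + e₃)) * (ω i - ω j) := by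
    intro i j
    rw [hspread, div_mul_eq_mul_div]
  refine ⟨hspread, fun k l => ?_, hspread imax imin⟩
  rw [mul_div_right_comm]
  exact sub_le_mul_extreme_sub (by positivity) hspread' hmax hmin k l

theorem stationary_price_spread
    (n : ℕ) (α e₁ e₂ e₃ β : ℝ) (hα : 0 < α) (he₁ : 0 < e₁) (he₃ : 0 < e₃)
    (he₂β : 0 ≤ e₂ * β)
    (ω p : Fin n → ℝ)
    (hstat : ∀ i, e₁ * (ω i - 2 * p i) / α
        + (2 * e₂ * β / α) * (∑ k, (ω k - p k) / α)
        - 2 * e₃ * p i / α ^ 2 = 0)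
    (imax imin : Fin n)
    (hmax : ∀ k, ω k ≤ ω imax) (hmin : ∀ k, ω imin ≤ ω k) :
    (∀ i j, p i - p j = e₁ * α * (ω i - ω j) / (2 * (α * e₁ + e₃))) ∧
    (∀ k l, p k - p l ≤ e₁ * α * (ω imax - ω imin) / (2 * (α * e₁ + e₃))) ∧
    p imax - p imin = e₁ * α * (ω imax - ω imin) / (2 * (α * e₁ + e₃)) :=
  stationary_price_spread_general n α e₁ e₂ e₃ β hα he₁ he₃ ω p hstat imax imin hmax hmin
end
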